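/- arXiv:1010.0076 — 5 statements merged into one kernel-verified Lean document; each statement's English description precedes it below -/
import Mathlib

section
/- Let A be a von Neumann algebra on a Z/2-graded Hilbert space H, graded by τ(x) = uxu where u is the grading unitary (so uAu = A). Then the supercommutant A^♮ equals κ A' κ*, where A' is the ordinary commutant and κ the Klein transformation. In particular A^♮ is unitarily equivalent to A'. -/
open ContinuousLinearMap

variable {H : Type*} [NormedAddCommGroup H] [InnerProductSpace ℂ H] [CompleteSpace H]

/-- Even part of a bounded operator with respect to the grading unitary `u`. -/
noncomputable def evenPart (u x : H →L[ℂ] H) : H →L[ℂ] H := (2⁻¹ : ℂ) • (x + u * x * u)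

/-- Odd part of a bounded operator with respect to the grading unitary `u`. -/
noncomputable def oddPart (u x : H →L[ℂ] H) : H →L[ℂ] H := (2⁻¹ : ℂ) • (x - u * x * u)

/-- Supercommutator `[x,y]_τ = [x₀,y₀] + [x₀,y₁] + [x₁,y₀] + [x₁,y₁]₊`. -/
noncomputable def superComm (u x y : H →L[ℂ] H) : H →L[ℂ] H :=
  (evenPart u x * evenPart u y - evenPart u y * evenPart u x) +
  (evenPart u x * oddPart u y - oddPart u y * evenPart u x) +
  (oddPart u x * evenPart u y - evenPart u y * oddPart u x) +
  (oddPart u x * oddPart u y + oddPart u y * oddPart u x)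

/-- Supercommutant of a set of bounded operators. -/
noncomputable def superCommutant (u : H →L[ℂ] H) (S : Set (H →L[ℂ] H)) :
    Set (H →L[ℂ] H) := {b | ∀ a ∈ S, superComm u a b = 0}

/-!
With `p₀ = (1 + u) / 2` and `p₁ = (1 - u) / 2`, the Klein transformation is
`κ = p₀ + i p₁ = (1 + i) / 2 + (1 - i) / 2 • u`, and for a self-adjoint involution `u` its adjoint
`(1 - i) / 2 + (1 + i) / 2 • u` is its inverse. Expanding even and odd parts, the supercommutator
`[x, κ c κ*]_τ` is an explicit linear combination of the commutators `⁅x, c⁆` and `⁅u x u, c⁆`, and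
conversely `⁅x, κ* b κ⁆` is one of `[x, b]_τ` and `[u x u, b]_τ`. For a set closed under the
grading `x ↦ u x u`, `b` therefore supercommutes with all of it exactly when `κ* b κ` commutes with
all of it.
-/

section Klein

variable {R : Type*} [Ring R] [Algebra ℂ R]

noncomputable def klein (u : R) : R := ((1 + Complex.I) * 2⁻¹) • 1 + ((1 - Complex.I) * 2⁻¹) • u

noncomputable def kleinInv (u : R) : R := ((1 - Complex.I) * 2⁻¹) • 1 + ((1 + Complex.I) * 2⁻¹) • u

lemma klein_mul_kleinInv {u : R} (hu : u * u = 1) : klein u * kleinInv u = 1 := by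
  simp only [klein, kleinInv, add_mul, mul_add, smul_mul_smul_comm, one_mul, mul_one, hu]
  match_scalars <;> ring_nf <;> simp only [Complex.I_sq] <;> ring_nf

lemma star_klein [StarRing R] [StarModule ℂ R] {u : R} (hu : IsSelfAdjoint u) :
    star (klein u) = kleinInv u := by
  simp [klein, kleinInv, hu.star_eq, sub_eq_add_neg]

end Klein

lemma IsIdempotentElem.sub_one_sub_mul_self {R : Type*} [Ring R] {p : R} (h : IsIdempotentElem p) :
    (p - (1 - p)) * (p - (1 - p)) = 1 := by
  simp only [sub_mul, mul_sub, h.eq, one_mul, mul_one]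
  abel

section Operators

variable {E : Type*} [NormedAddCommGroup E] [InnerProductSpace ℂ E]

lemma superComm_klein_conj {u : E →L[ℂ] E} (hu : u * u = 1) (x c : E →L[ℂ] E) :
    superComm u x (klein u * c * kleinInv u)
      = (2⁻¹ : ℂ) • (⁅x, c⁆ + u * ⁅u * x * u, c⁆ * u)
        + (Complex.I * 2⁻¹) • ((⁅x, c⁆ - u * ⁅u * x * u, c⁆ * u) * u) := by
  have hu' : ∀ z : E →L[ℂ] E, u * (u * z) = z := fun z => by rw [← mul_assoc, hu, one_mul]
  simp only [Ring.lie_def, klein, kleinInv, superComm, evenPart, oddPart, mul_add, add_mul,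
    mul_sub, sub_mul, smul_mul_assoc, mul_smul_comm, smul_add, smul_sub, smul_smul, mul_assoc,
    one_mul, mul_one, hu', hu]
  match_scalars <;> ring_nf <;> simp only [Complex.I_sq] <;> ring_nf

lemma lie_kleinInv_conj {u : E →L[ℂ] E} (hu : u * u = 1) (x b : E →L[ℂ] E) :
    ⁅x, kleinInv u * b * klein u⁆
      = (2⁻¹ : ℂ) • (superComm u x b + u * superComm u (u * x * u) b * u)
        - (Complex.I * 2⁻¹) • ((superComm u x b - u * superComm u (u * x * u) b * u) * u) := by
  have hu' : ∀ z : E →L[ℂ] E, u * (u * z) = z := fun z => by rw [← mul_assoc, hu, one_mul]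
  simp only [Ring.lie_def, klein, kleinInv, superComm, evenPart, oddPart, mul_add, add_mul,
    mul_sub, sub_mul, smul_mul_assoc, mul_smul_comm, smul_add, smul_sub, smul_smul, mul_assoc,
    one_mul, mul_one, hu', hu]
  match_scalars <;> ring_nf <;> simp only [Complex.I_sq] <;> ring_nf

theorem superCommutant_eq_klein_conj_centralizer {u : E →L[ℂ] E} (hu : u * u = 1)
    {S : Set (E →L[ℂ] E)} (hS : ∀ a ∈ S, u * a * u ∈ S) :
    superCommutant u S = (fun c => klein u * c * kleinInv u) '' S.centralizer := by
  ext b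
  constructor
  · intro hb
    refine ⟨kleinInv u * b * klein u, fun a ha => ?_, ?_⟩
    · rw [← sub_eq_zero, ← Ring.lie_def, lie_kleinInv_conj hu, hb a ha, hb _ (hS a ha)]
      simp
    · simp only [← mul_assoc, klein_mul_kleinInv hu, one_mul]
      rw [mul_assoc, klein_mul_kleinInv hu, mul_one]
  · rintro ⟨c, hc, rfl⟩ a ha
    have hlie : ∀ x ∈ S, ⁅x, c⁆ = 0 := fun x hx => by rw [Ring.lie_def, hc x hx, sub_self]
    show superComm u a _ = 0
    rw [superComm_klein_conj hu, hlie a ha, hlie _ (hS a ha)]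
    simp

end Operators

theorem superCommutant_eq_klein_conj_commutant_general
    (p₀ p₁ : H →L[ℂ] H)
    (h₀ : IsIdempotentElem p₀)
    (h₀sa : IsSelfAdjoint p₀)
    (hsum : p₀ + p₁ = 1)
    (u κ : H →L[ℂ] H)
    (hu : u = p₀ - p₁) (hκ : κ = p₀ + Complex.I • p₁)
    (A : VonNeumannAlgebra H)
    (hgraded : ∀ a ∈ (A : Set (H →L[ℂ] H)), u * a * u ∈ (A : Set (H →L[ℂ] H))) :
    superCommutant u (A : Set (H →L[ℂ] H)) =
      (fun y => κ * y * ContinuousLinearMap.adjoint κ) ''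
        (A.commutant : Set (H →L[ℂ] H)) := by
  obtain rfl : p₁ = 1 - p₀ := eq_sub_of_add_eq' hsum
  have hu2 : u * u = 1 := hu ▸ h₀.sub_one_sub_mul_self
  have husa : IsSelfAdjoint u := hu ▸ h₀sa.sub (.sub (.one _) h₀sa)
  have hκu : κ = klein u := by rw [hκ, hu, klein]; module
  rw [← star_eq_adjoint, hκu, star_klein husa, VonNeumannAlgebra.coe_commutant]
  exact superCommutant_eq_klein_conj_centralizer hu2 hgraded

/-- For a von Neumann algebra `A` on a ℤ/2-graded Hilbert space, graded
by `τ(x) = uxu`, the supercommutant `A^♮` equals `κ A' κ*`, where `A'` is the ordinary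
commutant and `κ` the Klein transformation; in particular `A^♮` is unitarily
equivalent to `A'`. -/
theorem superCommutant_eq_klein_conj_commutant
    (p₀ p₁ : H →L[ℂ] H)
    (h₀ : IsIdempotentElem p₀) (h₁ : IsIdempotentElem p₁)
    (h₀sa : IsSelfAdjoint p₀) (h₁sa : IsSelfAdjoint p₁)
    (horth : p₀ * p₁ = 0) (hsum : p₀ + p₁ = 1)
    (u κ : H →L[ℂ] H)
    (hu : u = p₀ - p₁) (hκ : κ = p₀ + Complex.I • p₁)
    (A : VonNeumannAlgebra H)
    (hgraded : ∀ a ∈ (A : Set (H →L[ℂ] H)), u * a * u ∈ (A : Set (H →L[ℂ] H))) :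
    superCommutant u (A : Set (H →L[ℂ] H)) =
      (fun y => κ * y * ContinuousLinearMap.adjoint κ) ''
        (A.commutant : Set (H →L[ℂ] H)) :=
  superCommutant_eq_klein_conj_commutant_general p₀ p₁ h₀ h₀sa hsum u κ hu hκ A hgraded
end

section
/- For s ∈ ℝ, define the Sobolev norm ‖ξ‖_(s) = ‖(I + L₀)^s ξ‖ on finite-energy vectors of a positive-energy representation of the Neveu-Schwarz algebra. Then there is a constant k > 0 (depending on s) with ‖G_r ξ‖_(s) ≤ k (1 + |r|)^{|s| + 1/2} ‖ξ‖_(s + 1/2) for all finite-energy vectors ξ and all r ∈ ℤ + 1/2. -/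
open scoped InnerProductSpace

/-! The anticommutation relation gives `‖G_r c‖² + ‖G_{-r} c‖² = 2μ‖c‖²` for an `L₀`-eigenvector
`c` of eigenvalue `μ`; hence `L₀` is symmetric with nonnegative eigenvalues, and
`‖G_r c‖ ≤ √(2(1+μ)) ‖c‖`. When nonzero, `G_r c` is an eigenvector of eigenvalue `μ - r ≥ 0`, and
`(1+μ-r)^s ≤ (1+|r|)^|s| (1+μ)^s`, which gives the estimate on eigenvectors with `k = √2`.
Grouping a finite-energy vector by eigenvalue, both sides become sums over mutually orthogonal
eigenspaces of `L₀`, so the estimate extends to all vectors by Pythagoras. -/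

theorem Real.rpow_le_rpow_abs_mul_rpow_of_le_mul {a b c : ℝ} (s : ℝ) (hb : 0 < b) (hc : 0 < c)
    (hab : a ≤ b * c) (hba : b ≤ a * c) : a ^ s ≤ c ^ |s| * b ^ s := by
  have ha : 0 < a := by nlinarith
  rcases le_or_gt 0 s with hs | hs
  · rw [abs_of_nonneg hs, ← Real.mul_rpow hc.le hb.le, mul_comm c]
    exact Real.rpow_le_rpow ha.le hab hs
  · rw [abs_of_neg hs, Real.rpow_neg hc.le, inv_mul_eq_div, ← Real.div_rpow hb.le hc.le]
    exact Real.rpow_le_rpow_of_nonpos (by positivity) ((div_le_iff₀ hc).2 hba) hs.le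

section Eigenvectors

variable {𝕜 E ι : Type*} [RCLike 𝕜] [NormedAddCommGroup E] [InnerProductSpace 𝕜 E]
  {A : E →ₗ[𝕜] E}

theorem LinearMap.IsSymmetric.norm_sum_sq_of_eigenvectors (hA : A.IsSymmetric) (s : Finset ι)
    {e : ι → 𝕜} (he : e.Injective) {x : ι → E} (hx : ∀ i, A (x i) = e i • x i) :
    ‖∑ i ∈ s, x i‖ ^ 2 = ∑ i ∈ s, ‖x i‖ ^ 2 :=
  (hA.orthogonalFamily_eigenspaces.comp he).norm_sum
    (fun i => ⟨x i, Module.End.mem_eigenspace_iff.2 (hx i)⟩) s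

theorem LinearMap.IsSymmetric.norm_sum_le_of_eigenvectors (hA : A.IsSymmetric) (s : Finset ι)
    {e e' : ι → 𝕜} (he : e.Injective) (he' : e'.Injective) {x y : ι → E}
    (hx : ∀ i, A (x i) = e i • x i) (hy : ∀ i, A (y i) = e' i • y i) {K : ℝ} (hK : 0 ≤ K)
    (hxy : ∀ i ∈ s, ‖x i‖ ≤ K * ‖y i‖) : ‖∑ i ∈ s, x i‖ ≤ K * ‖∑ i ∈ s, y i‖ := by
  refine le_of_pow_le_pow_left₀ two_ne_zero (by positivity) ?_
  rw [mul_pow, hA.norm_sum_sq_of_eigenvectors s he hx, hA.norm_sum_sq_of_eigenvectors s he' hy,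
    Finset.mul_sum]
  gcongr with i hi
  rw [← mul_pow]
  exact pow_le_pow_left₀ (norm_nonneg _) (hxy i hi) 2

end Eigenvectors

theorem exists_sum_eigenvectors_fiberwise {M ι : Type*} [AddCommGroup M] [Module ℂ M]
    [Fintype ι] (f : M →ₗ[ℂ] M) (c : ι → M) (μ : ι → ℝ)
    (hc : ∀ i, f (c i) = (μ i : ℂ) • c i) :
    ∃ (S : Finset ℝ) (d : ℝ → M), ∑ i, c i = ∑ t ∈ S, d t ∧ ∀ t, f (d t) = (t : ℂ) • d t := by
  classical
  refine ⟨Finset.univ.image μ, fun t => ∑ i with μ i = t, c i, ?_, fun t => ?_⟩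
  · exact (Finset.sum_fiberwise_of_maps_to (fun i _ => Finset.mem_image_of_mem μ
      (Finset.mem_univ i)) c).symm
  · rw [map_sum, Finset.smul_sum]
    refine Finset.sum_congr rfl fun i hi => ?_
    rw [hc i, (Finset.mem_filter.1 hi).2]

namespace NeveuSchwarz

variable {V : Type*} [NormedAddCommGroup V] [InnerProductSpace ℂ V]
  {L₀ : V →ₗ[ℂ] V} {G : ℝ → V →ₗ[ℂ] V}

theorem two_mul_inner_L₀ (hadj : ∀ (r : ℝ) (ξ η : V), ⟪G r ξ, η⟫_ℂ = ⟪ξ, G (-r) η⟫_ℂ)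
    (hanti : ∀ (r : ℝ) (ξ : V), G r (G (-r) ξ) + G (-r) (G r ξ) = (2 : ℂ) • L₀ ξ)
    (r : ℝ) (ξ η : V) :
    2 * ⟪ξ, L₀ η⟫_ℂ = ⟪G r ξ, G r η⟫_ℂ + ⟪G (-r) ξ, G (-r) η⟫_ℂ := by
  have hadj' : ∀ ξ η : V, ⟪G (-r) ξ, η⟫_ℂ = ⟪ξ, G r η⟫_ℂ := fun ξ η => by
    simpa only [neg_neg] using hadj (-r) ξ η
  rw [← inner_smul_right, ← hanti r η, inner_add_right, ← hadj' ξ, ← hadj r ξ, add_comm]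

theorem isSymmetric_L₀ (hadj : ∀ (r : ℝ) (ξ η : V), ⟪G r ξ, η⟫_ℂ = ⟪ξ, G (-r) η⟫_ℂ)
    (hanti : ∀ (r : ℝ) (ξ : V), G r (G (-r) ξ) + G (-r) (G r ξ) = (2 : ℂ) • L₀ ξ) :
    L₀.IsSymmetric := by
  intro ξ η
  refine mul_left_cancel₀ (two_ne_zero : (2 : ℂ) ≠ 0) ?_
  calc 2 * ⟪L₀ ξ, η⟫_ℂ = starRingEnd ℂ (2 * ⟪η, L₀ ξ⟫_ℂ) := by
        rw [map_mul, inner_conj_symm, map_ofNat]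
    _ = 2 * ⟪ξ, L₀ η⟫_ℂ := by
        rw [two_mul_inner_L₀ hadj hanti 0, two_mul_inner_L₀ hadj hanti 0, map_add,
          inner_conj_symm, inner_conj_symm]

theorem norm_sq_add_norm_sq_of_eigenvector
    (hadj : ∀ (r : ℝ) (ξ η : V), ⟪G r ξ, η⟫_ℂ = ⟪ξ, G (-r) η⟫_ℂ)
    (hanti : ∀ (r : ℝ) (ξ : V), G r (G (-r) ξ) + G (-r) (G r ξ) = (2 : ℂ) • L₀ ξ)
    (r : ℝ) {μ : ℝ} {c : V} (hc : L₀ c = (μ : ℂ) • c) :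
    ‖G r c‖ ^ 2 + ‖G (-r) c‖ ^ 2 = 2 * μ * ‖c‖ ^ 2 := by
  have h := two_mul_inner_L₀ hadj hanti r c c
  rw [hc, inner_smul_right, inner_self_eq_norm_sq_to_K, inner_self_eq_norm_sq_to_K,
    inner_self_eq_norm_sq_to_K] at h
  have h' : ((‖G r c‖ ^ 2 + ‖G (-r) c‖ ^ 2 : ℝ) : ℂ) = ((2 * μ * ‖c‖ ^ 2 : ℝ) : ℂ) := by
    push_cast
    linear_combination -h
  exact_mod_cast h'

theorem eigenvalue_nonneg (hadj : ∀ (r : ℝ) (ξ η : V), ⟪G r ξ, η⟫_ℂ = ⟪ξ, G (-r) η⟫_ℂ)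
    (hanti : ∀ (r : ℝ) (ξ : V), G r (G (-r) ξ) + G (-r) (G r ξ) = (2 : ℂ) • L₀ ξ)
    {μ : ℝ} {c : V} (hc0 : c ≠ 0) (hc : L₀ c = (μ : ℂ) • c) : 0 ≤ μ := by
  have h := norm_sq_add_norm_sq_of_eigenvector hadj hanti 0 hc
  have hc_pos : 0 < ‖c‖ ^ 2 := by positivity
  nlinarith [sq_nonneg ‖G 0 c‖, sq_nonneg ‖G (-0) c‖]

theorem L₀_G_apply_of_eigenvector
    (hcomm : ∀ (r : ℝ) (ξ : V), L₀ (G r ξ) = G r (L₀ ξ) - (r : ℂ) • G r ξ)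
    (r : ℝ) {μ : ℝ} {c : V} (hc : L₀ c = (μ : ℂ) • c) :
    L₀ (G r c) = ((μ - r : ℝ) : ℂ) • G r c := by
  rw [hcomm, hc, map_smul, Complex.ofReal_sub, sub_smul]

section Sobolev

variable {T : ℝ → V →ₗ[ℂ] V}

theorem L₀_T_apply_of_eigenvector
    (hT : ∀ (s μ : ℝ) (ξ : V), L₀ ξ = (μ : ℂ) • ξ → T s ξ = ((1 + μ) ^ s : ℝ) • ξ)
    (s : ℝ) {μ : ℝ} {c : V} (hc : L₀ c = (μ : ℂ) • c) : L₀ (T s c) = (μ : ℂ) • T s c := by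
  rw [hT s μ c hc, LinearMap.map_smul_of_tower, hc, smul_comm]

theorem norm_T_apply_of_eigenvector
    (hT : ∀ (s μ : ℝ) (ξ : V), L₀ ξ = (μ : ℂ) • ξ → T s ξ = ((1 + μ) ^ s : ℝ) • ξ)
    (s : ℝ) {μ : ℝ} (hμ : -1 ≤ μ) {c : V} (hc : L₀ c = (μ : ℂ) • c) :
    ‖T s c‖ = (1 + μ) ^ s * ‖c‖ := by
  rw [hT s μ c hc, norm_smul, Real.norm_of_nonneg (Real.rpow_nonneg (by linarith) s)]

theorem sobolev_estimate_of_eigenvector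
    (hT : ∀ (s μ : ℝ) (ξ : V), L₀ ξ = (μ : ℂ) • ξ → T s ξ = ((1 + μ) ^ s : ℝ) • ξ)
    (hadj : ∀ (r : ℝ) (ξ η : V), ⟪G r ξ, η⟫_ℂ = ⟪ξ, G (-r) η⟫_ℂ)
    (hanti : ∀ (r : ℝ) (ξ : V), G r (G (-r) ξ) + G (-r) (G r ξ) = (2 : ℂ) • L₀ ξ)
    (hcomm : ∀ (r : ℝ) (ξ : V), L₀ (G r ξ) = G r (L₀ ξ) - (r : ℂ) • G r ξ)
    (s r : ℝ) {μ : ℝ} {c : V} (hc : L₀ c = (μ : ℂ) • c) :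
    ‖T s (G r c)‖ ≤ √2 * (1 + |r|) ^ (|s| + 1 / 2) * ‖T (s + 1 / 2) c‖ := by
  by_cases hGc : G r c = 0
  · rw [hGc, map_zero, norm_zero]
    positivity
  have hGc' := L₀_G_apply_of_eigenvector hcomm r hc
  have hμ : 0 ≤ μ := eigenvalue_nonneg hadj hanti (fun h => hGc (by rw [h, map_zero])) hc
  have hμr : 0 ≤ μ - r := eigenvalue_nonneg hadj hanti hGc hGc'
  have hG : ‖G r c‖ ≤ √2 * (1 + μ) ^ (1 / 2 : ℝ) * ‖c‖ := by
    rw [← Real.sqrt_eq_rpow, ← Real.sqrt_mul zero_le_two, ← Real.sqrt_sq (norm_nonneg c),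
      ← Real.sqrt_mul (by positivity)]
    apply Real.le_sqrt_of_sq_le
    nlinarith [norm_sq_add_norm_sq_of_eigenvector hadj hanti r hc, sq_nonneg ‖G (-r) c‖,
      sq_nonneg ‖c‖]
  have hshift : (1 + (μ - r)) ^ s ≤ (1 + |r|) ^ |s| * (1 + μ) ^ s :=
    Real.rpow_le_rpow_abs_mul_rpow_of_le_mul s (by linarith) (by positivity)
      (by nlinarith [neg_abs_le r, abs_nonneg r]) (by nlinarith [le_abs_self r, abs_nonneg r])
  rw [norm_T_apply_of_eigenvector hT s (by linarith) hGc',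
    norm_T_apply_of_eigenvector hT _ (by linarith) hc]
  calc (1 + (μ - r)) ^ s * ‖G r c‖
      ≤ ((1 + |r|) ^ |s| * (1 + μ) ^ s) * (√2 * (1 + μ) ^ (1 / 2 : ℝ) * ‖c‖) := by gcongr
    _ = √2 * (1 + |r|) ^ |s| * ((1 + μ) ^ (s + 1 / 2) * ‖c‖) := by
        rw [Real.rpow_add (by linarith)]
        ring
    _ ≤ √2 * (1 + |r|) ^ (|s| + 1 / 2) * ((1 + μ) ^ (s + 1 / 2) * ‖c‖) := by
        gcongr
        · linarith [abs_nonneg r]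
        · linarith

end Sobolev

end NeveuSchwarz

/-- Sobolev estimate for the odd generators of the Neveu-Schwarz algebra.
`V` is the space of finite-energy vectors of a unitary positive-energy representation:
every vector is a finite sum of mutually orthogonal `L₀`-eigenvectors with eigenvalues
in `½ℕ`; `G r` are the odd generators with `G_r* = G_{-r}`, `2L₀ = G_rG_{-r}+G_{-r}G_r`
and `[L₀, G_r] = -r G_r`; `T s` is the operator `(I + L₀)^s` (acting on an eigenvector
of eigenvalue `μ` as multiplication by `(1+μ)^s`), so the Sobolev norm is
`‖ξ‖_(s) = ‖T s ξ‖`. Then for each `s ∈ ℝ` there is `k > 0` with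
`‖G_r ξ‖_(s) ≤ k (1+|r|)^(|s|+1/2) ‖ξ‖_(s+1/2)` for all `ξ` and all `r ∈ ℤ + ½`. -/
theorem neveu_schwarz_sobolev_estimate
    {V : Type*} [NormedAddCommGroup V] [InnerProductSpace ℂ V]
    (L₀ : V →ₗ[ℂ] V) (G : ℝ → V →ₗ[ℂ] V) (T : ℝ → V →ₗ[ℂ] V)
    (hT : ∀ (s μ : ℝ) (ξ : V), L₀ ξ = (μ : ℂ) • ξ → T s ξ = ((1 + μ) ^ s : ℝ) • ξ)
    (hdiag : ∀ ξ : V, ∃ (n : ℕ) (c : Fin n → V) (μ : Fin n → ℝ),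
      ξ = ∑ i, c i ∧ (∀ i, ∃ m : ℕ, μ i = (m : ℝ) / 2) ∧
      (∀ i, L₀ (c i) = ((μ i : ℝ) : ℂ) • c i) ∧
      (∀ i j, i ≠ j → ⟪c i, c j⟫_ℂ = 0))
    (hadj : ∀ (r : ℝ) (ξ η : V), ⟪G r ξ, η⟫_ℂ = ⟪ξ, G (-r) η⟫_ℂ)
    (hanti : ∀ (r : ℝ) (ξ : V), G r (G (-r) ξ) + G (-r) (G r ξ) = (2 : ℂ) • L₀ ξ)
    (hcomm : ∀ (r : ℝ) (ξ : V), L₀ (G r ξ) = G r (L₀ ξ) - (r : ℂ) • G r ξ)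
    (s : ℝ) :
    ∃ k > (0 : ℝ), ∀ r : ℝ, (∃ z : ℤ, r = (z : ℝ) + 1/2) →
      ∀ ξ : V, ‖T s (G r ξ)‖ ≤ k * (1 + |r|) ^ (|s| + 1/2) * ‖T (s + 1/2) ξ‖ := by
  have hsym := NeveuSchwarz.isSymmetric_L₀ hadj hanti
  refine ⟨√2, by positivity, fun r _ ξ => ?_⟩
  obtain ⟨n, c, μ, rfl, -, hc, -⟩ := hdiag ξ
  obtain ⟨S, d, hsum, hd⟩ := exists_sum_eigenvectors_fiberwise L₀ c μ hc
  rw [hsum, map_sum, map_sum, map_sum]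
  exact hsym.norm_sum_le_of_eigenvectors S
    (e := fun t => ((t - r : ℝ) : ℂ)) (e' := fun t => (t : ℂ))
    (Complex.ofReal_injective.comp (sub_left_injective (b := r))) Complex.ofReal_injective
    (fun t => NeveuSchwarz.L₀_T_apply_of_eigenvector hT s
      (NeveuSchwarz.L₀_G_apply_of_eigenvector hcomm r (hd t)))
    (fun t => NeveuSchwarz.L₀_T_apply_of_eigenvector hT (s + 1 / 2) (hd t)) (by positivity)
    fun t _ => NeveuSchwarz.sobolev_estimate_of_eigenvector hT hadj hanti hcomm s r (hd t)
end

section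
/- Let f be a function continuous on the closed unit disc, holomorphic on the open unit disc, with nonnegative Taylor coefficients at 0, and suppose f vanishes on an arc of the unit circle of positive length. Then f is identically zero. -/
/-! Choose `N > 2π / ε`. The rotations of the arc by the `N`-th roots of unity cover the unit
circle, so `z ↦ ∏_{ω ^ N = 1} f (ω * z)` vanishes on the circle, hence on the disc by the maximum
modulus principle. Since zeros of analytic functions are isolated, some factor `f (ω * ·)`
vanishes near `0`, and the identity theorem gives `f = 0` on the closed disc. -/

open Metric Filter Set Topology Complex
open scoped Real

namespace DiffContOnCl

theorem fun_finsetProd {𝕜 𝔸 ι : Type*} [NontriviallyNormedField 𝕜] [NormedCommRing 𝔸]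
    [NormedAlgebra 𝕜 𝔸] {f : ι → 𝕜 → 𝔸} {u : Finset ι} {s : Set 𝕜}
    (hf : ∀ i ∈ u, DiffContOnCl 𝕜 (f i) s) : DiffContOnCl 𝕜 (∏ i ∈ u, f i ·) s :=
  ⟨.fun_finsetProd fun i hi ↦ (hf i hi).1, continuousOn_finsetProd u fun i hi ↦ (hf i hi).2⟩

theorem comp_mul_left_ball {E : Type*} [NormedAddCommGroup E] [NormedSpace ℂ E]
    {f : ℂ → E} {r : ℝ} (hf : DiffContOnCl ℂ f (ball 0 r)) {ω : ℂ} (hω : ‖ω‖ ≤ 1) :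
    DiffContOnCl ℂ (fun z ↦ f (ω * z)) (ball 0 r) :=
  hf.comp (differentiable_id.const_mul ω).diffContOnCl fun z hz ↦ by
    rw [mem_ball_zero_iff] at hz ⊢
    rw [norm_mul]
    exact (mul_le_of_le_one_left (norm_nonneg z) hω).trans_lt hz

theorem eqOn_zero_of_eventuallyEq_zero {F : Type*} [NormedAddCommGroup F] [NormedSpace ℂ F]
    [CompleteSpace F] {f : ℂ → F} {c z₀ : ℂ} {r : ℝ} (hf : DiffContOnCl ℂ f (ball c r))
    (hz₀ : z₀ ∈ ball c r) (h : f =ᶠ[𝓝 z₀] 0) : EqOn f 0 (closedBall c r) := by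
  have hr : r ≠ 0 := (pos_of_mem_ball hz₀).ne'
  have hball : EqOn f 0 (ball c r) :=
    (hf.1.analyticOnNhd isOpen_ball).eqOn_zero_of_preconnected_of_eventuallyEq_zero
      (convex_ball c r).isPreconnected hz₀ h
  exact hball.of_subset_closure hf.continuousOn_ball continuousOn_const ball_subset_closedBall
    (closure_ball c hr).ge

end DiffContOnCl

theorem AnalyticAt.exists_eventuallyEq_zero_of_finsetProd {𝕜 ι : Type*}
    [NontriviallyNormedField 𝕜] {f : ι → 𝕜 → 𝕜} {u : Finset ι} {x : 𝕜}
    (hf : ∀ i ∈ u, AnalyticAt 𝕜 (f i) x) (h : (∏ i ∈ u, f i ·) =ᶠ[𝓝 x] 0) :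
    ∃ i ∈ u, f i =ᶠ[𝓝 x] 0 := by
  by_contra! hne
  have hne' : ∀ i ∈ u, ∀ᶠ z in 𝓝[≠] x, f i z ≠ 0 := fun i hi ↦
    ((hf i hi).eventually_eq_zero_or_eventually_ne_zero).resolve_left (hne i hi)
  obtain ⟨z, hz, hz0⟩ :=
    ((eventually_all_finset u).2 hne' |>.and (h.filter_mono nhdsWithin_le_nhds)).exists
  exact Finset.prod_ne_zero_iff.2 hz hz0

theorem diffContOnCl_tsum_mul_pow {c : ℕ → ℂ} (hc : Summable (‖c ·‖)) :
    DiffContOnCl ℂ (fun z ↦ ∑' n, c n * z ^ n) (ball 0 1) := by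
  have hle : ∀ n, ∀ z ∈ closedBall (0 : ℂ) 1, ‖c n * z ^ n‖ ≤ ‖c n‖ := fun n z hz ↦ by
    rw [norm_mul, norm_pow]
    exact mul_le_of_le_one_right (norm_nonneg _) (pow_le_one₀ (norm_nonneg z)
      (mem_closedBall_zero_iff.1 hz))
  exact .mk_ball
    (differentiableOn_tsum_of_summable_norm hc (fun n ↦ by fun_prop) isOpen_ball
      fun n z hz ↦ hle n z (ball_subset_closedBall hz))
    (continuousOn_tsum (fun n ↦ by fun_prop) hc hle)

theorem exists_pow_eq_one_mul_mem_arc {N : ℕ} (hN : 0 < N) {z : ℂ} (hz : ‖z‖ = 1) (θ₁ : ℝ) :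
    ∃ ω : ℂ, ω ^ N = 1 ∧ ∃ θ : ℝ, |θ - θ₁| ≤ 2 * π / N ∧ ω * z = exp (θ * I) := by
  have hδ : 0 < 2 * π / N := by positivity
  obtain ⟨m, ⟨hm₁, hm₂⟩, -⟩ := existsUnique_add_zsmul_mem_Ico hδ (arg z) (θ₁ - 2 * π / N)
  refine ⟨exp ((m * (2 * π / N) : ℝ) * I), ?_, arg z + m • (2 * π / N), ?_, ?_⟩
  · rw [← exp_nat_mul, ← exp_int_mul_two_pi_mul_I m]
    congr 1
    have : (N : ℂ) ≠ 0 := by exact_mod_cast hN.ne'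
    push_cast
    field_simp
  · rw [abs_le]
    constructor <;> linarith
  · conv_lhs => rw [← norm_mul_exp_arg_mul_I z, hz]
    rw [ofReal_one, one_mul, ← exp_add, zsmul_eq_mul]
    push_cast
    ring_nf

theorem DiffContOnCl.eqOn_zero_of_vanishes_on_arc {f : ℂ → ℂ} (hf : DiffContOnCl ℂ f (ball 0 1))
    {θ₁ ε : ℝ} (hε : 0 < ε) (hvan : ∀ θ : ℝ, |θ - θ₁| ≤ ε → f (exp (θ * I)) = 0) :
    EqOn f 0 (closedBall 0 1) := by
  obtain ⟨N, hN⟩ := exists_nat_gt (2 * π / ε)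
  have hN₀ : 0 < N := by exact_mod_cast (by positivity : 0 < 2 * π / ε).trans hN
  have hNε : 2 * π / N ≤ ε := by
    rw [div_lt_iff₀ hε] at hN
    rw [div_le_iff₀ (by positivity)]
    linarith
  set roots := Polynomial.nthRootsFinset N (1 : ℂ)
  have hroots : ∀ ω ∈ roots, ‖ω‖ = 1 := fun ω hω ↦
    norm_eq_one_of_pow_eq_one ((Polynomial.mem_nthRootsFinset hN₀ 1).1 hω) hN₀.ne'
  have hrot : ∀ ω ∈ roots, DiffContOnCl ℂ (fun z ↦ f (ω * z)) (ball 0 1) := fun ω hω ↦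
    hf.comp_mul_left_ball (hroots ω hω).le
  have hprod : EqOn (fun z ↦ ∏ ω ∈ roots, f (ω * z)) 0 (frontier (ball 0 1)) := by
    intro z hz
    rw [frontier_ball 0 one_ne_zero, mem_sphere_zero_iff_norm] at hz
    obtain ⟨ω, hωN, θ, hθ, hωz⟩ := exists_pow_eq_one_mul_mem_arc hN₀ hz θ₁
    exact Finset.prod_eq_zero ((Polynomial.mem_nthRootsFinset hN₀ 1).2 hωN)
      (hωz ▸ hvan θ (hθ.trans hNε))
  have hprod₀ : (fun z ↦ ∏ ω ∈ roots, f (ω * z)) =ᶠ[𝓝 0] 0 :=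
    eventually_of_mem (ball_mem_nhds 0 one_pos) <|
      eqOn_of_eqOn_frontier isBounded_ball (.fun_finsetProd hrot) diffContOnCl_const hprod
  obtain ⟨ω, hω, hfω⟩ := AnalyticAt.exists_eventuallyEq_zero_of_finsetProd
    (fun ω hω ↦ (hrot ω hω).1.analyticAt (ball_mem_nhds 0 one_pos)) hprod₀
  have hω₀ : ω ≠ 0 := norm_ne_zero_iff.1 (by simp [hroots ω hω])
  intro z hz
  have hz' : ω⁻¹ * z ∈ closedBall 0 1 := by
    simpa [norm_mul, norm_inv, hroots ω hω] using hz
  simpa [mul_inv_cancel_left₀ hω₀] using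
    (hrot ω hω).eqOn_zero_of_eventuallyEq_zero (mem_ball_self one_pos) hfω hz'

theorem vanishing_on_arc_of_nonneg_coeffs_general
    (f : ℂ → ℂ) (a : ℕ → ℝ)
    (hsum : Summable a)
    (hf : ∀ z : ℂ, ‖z‖ ≤ 1 → f z = ∑' n : ℕ, (a n : ℂ) * z ^ n)
    (θ₁ ε : ℝ) (hε : 0 < ε)
    (hvan : ∀ θ : ℝ, |θ - θ₁| ≤ ε → f (Complex.exp (θ * Complex.I)) = 0) :
    ∀ z : ℂ, ‖z‖ ≤ 1 → f z = 0 := by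
  have hF := diffContOnCl_tsum_mul_pow (c := fun n ↦ (a n : ℂ)) (by simpa using hsum.abs)
  have hfF : EqOn f (fun z ↦ ∑' n, (a n : ℂ) * z ^ n) (closedBall 0 1) := fun z hz ↦
    hf z (mem_closedBall_zero_iff.1 hz)
  have hfd : DiffContOnCl ℂ f (ball 0 1) :=
    .mk_ball (hF.1.congr fun z hz ↦ hfF (ball_subset_closedBall hz))
      (hF.continuousOn_ball.congr hfF)
  exact fun z hz ↦ hfd.eqOn_zero_of_vanishes_on_arc hε hvan (mem_closedBall_zero_iff.2 hz)

/-- A function continuous on the closed unit disc, holomorphic on the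
open disc, with nonnegative Taylor coefficients at 0, which vanishes on an arc of the
unit circle of positive length, is identically zero on the closed disc. -/
theorem vanishing_on_arc_of_nonneg_coeffs
    (f : ℂ → ℂ) (a : ℕ → ℝ)
    (ha : ∀ n, 0 ≤ a n) (hsum : Summable a)
    (hf : ∀ z : ℂ, ‖z‖ ≤ 1 → f z = ∑' n : ℕ, (a n : ℂ) * z ^ n)
    (θ₁ ε : ℝ) (hε : 0 < ε)
    (hvan : ∀ θ : ℝ, |θ - θ₁| ≤ ε → f (Complex.exp (θ * Complex.I)) = 0) :
    ∀ z : ℂ, ‖z‖ ≤ 1 → f z = 0 :=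
  vanishing_on_arc_of_nonneg_coeffs_general f a hsum hf θ₁ ε hε hvan
end

section
/- Define d_p^m = sin(pπ/m)/sin(π/m) for integers 1 ≤ p ≤ m-1. Then the SU(2) level-ℓ fusion rules are compatible with d: for all spins i, j with m = ℓ+2, p = 2i+1, q = 2j+1, one has d_p^m · d_q^m = Σ_{k ∈ ⟨i,j⟩_ℓ} d_{2k+1}^m, where ⟨i,j⟩_ℓ = { k : |i-j| ≤ k ≤ i+j, k ≡ i+j mod 1, i+j+k ≤ ℓ }. -/
/-!
With `θ = π/(l+2)`, multiplying the sum by `2 sin θ` turns every term `sin((u+1)θ)` into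
`cos(uθ) - cos((u+2)θ)`, so the sum over the progression `u = |a-b|, |a-b|+2, …, M` telescopes
to `cos(|a-b|θ) - cos((M+2)θ)`. The top channel is `M = min(a+b, 2l-a-b)`, and since
`(l+2)θ = π` the reflection `u ↦ 2l-u` does not change `cos((u+2)θ)`; hence the sum is
`cos((a-b)θ) - cos((a+b+2)θ) = 2 sin((a+1)θ) sin((b+1)θ)`, which is the claim.
-/

open Finset

/-- The quantum dimension `d_p^m = sin(pπ/m)/sin(π/m)`. -/
noncomputable def qdim (p : ℕ) (m : ℝ) : ℝ :=
  Real.sin ((p : ℝ) * Real.pi / m) / Real.sin (Real.pi / m)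

open Real

theorem two_mul_sin_mul_sum_range_sin (θ x : ℝ) (n : ℕ) :
    2 * sin θ * ∑ t ∈ range n, sin (x + (2 * t + 1) * θ) = cos x - cos (x + 2 * n * θ) := by
  rw [mul_sum]
  convert sum_range_sub' (fun t : ℕ => cos (x + 2 * t * θ)) n using 1
  · refine sum_congr rfl fun t _ => ?_
    rw [mul_right_comm, two_mul_sin_mul_sin]
    push_cast
    ring_nf
  · simp

theorem cos_mul_pi_div_eq_of_add_eq {m k k' : ℝ} (hm : m ≠ 0) (h : k + k' = 2 * m) :
    cos (k * (π / m)) = cos (k' * (π / m)) := by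
  rw [show k * (π / m) = 2 * π - k' * (π / m) by field_simp; linarith, cos_two_pi_sub]

theorem cos_natAbs_sub_mul (a b : ℕ) (θ : ℝ) :
    cos (((a : ℤ) - b).natAbs * θ) = cos ((a - b) * θ) := by
  have hc : ((((a : ℤ) - b).natAbs : ℕ) : ℝ) = |(a : ℝ) - b| := by simp [Nat.cast_natAbs]
  rcases abs_choice ((a : ℝ) - b) with h | h <;> rw [hc, h]
  rw [neg_mul, cos_neg]

theorem qdim_eq_sin_div (p : ℕ) (m : ℝ) : qdim p m = sin (p * (π / m)) / sin (π / m) := by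
  rw [qdim, mul_div_assoc]

def su2FusionChannels (l a b : ℕ) : Finset ℕ :=
  (range (a + b + 1)).filter fun u : ℕ =>
    |(a : ℤ) - (b : ℤ)| ≤ (u : ℤ) ∧ (a + b + u) % 2 = 0 ∧ a + b + u ≤ 2 * l

theorem su2FusionChannels_eq_image {l a b : ℕ} (ha : a ≤ l) (hb : b ≤ l) :
    su2FusionChannels l a b =
      (range ((min (a + b) (2 * l - a - b) - ((a : ℤ) - b).natAbs) / 2 + 1)).image
        fun t => ((a : ℤ) - b).natAbs + 2 * t := by
  ext u
  simp only [su2FusionChannels, mem_filter, mem_range, mem_image, abs_le]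
  constructor
  · rintro ⟨hu, hab, hpar, htop⟩
    exact ⟨(u - ((a : ℤ) - b).natAbs) / 2, by omega, by omega⟩
  · rintro ⟨t, ht, rfl⟩
    omega

theorem cos_min_add_two_mul_pi_div {l a b : ℕ} (hab : a + b ≤ 2 * l) :
    cos ((min (a + b) (2 * l - a - b) + 2 : ℕ) * (π / (l + 2))) =
      cos ((a + b + 2) * (π / (l + 2))) := by
  rcases le_total (a + b) l with h | h
  · congr 2
    norm_cast
    omega
  · refine cos_mul_pi_div_eq_of_add_eq (by positivity) ?_
    norm_cast
    omega

theorem two_mul_sin_mul_sum_su2FusionChannels {l a b : ℕ} (ha : a ≤ l) (hb : b ≤ l) :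
    2 * sin (π / (l + 2)) * ∑ u ∈ su2FusionChannels l a b, sin ((u + 1 : ℕ) * (π / (l + 2))) =
      2 * sin ((a + 1 : ℕ) * (π / (l + 2))) * sin ((b + 1 : ℕ) * (π / (l + 2))) := by
  rw [su2FusionChannels_eq_image ha hb, sum_image (fun _ _ _ _ h => by simpa using h)]
  set θ := π / ((l : ℝ) + 2)
  set c := ((a : ℤ) - b).natAbs
  set n := (min (a + b) (2 * l - a - b) - c) / 2
  have htop : c * θ + 2 * (n + 1 : ℕ) * θ = (min (a + b) (2 * l - a - b) + 2 : ℕ) * θ := by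
    rw [← add_mul]
    congr 1
    norm_cast
    omega
  calc _ = 2 * sin θ * ∑ t ∈ range (n + 1), sin (c * θ + (2 * t + 1) * θ) := by
        congr 1
        refine sum_congr rfl fun t _ => ?_
        push_cast
        ring_nf
    _ = cos ((a - b) * θ) - cos ((a + b + 2) * θ) := by
        rw [two_mul_sin_mul_sum_range_sin, cos_natAbs_sub_mul, htop,
          cos_min_add_two_mul_pi_div (by omega)]
    _ = _ := by
        rw [two_mul_sin_mul_sin]
        push_cast
        ring_nf

theorem su2_fusion_quantum_dimension_general
    (l : ℕ) (a b : ℕ) (ha : a ≤ l) (hb : b ≤ l) :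
    qdim (a + 1) ((l : ℝ) + 2) * qdim (b + 1) ((l : ℝ) + 2) =
      ∑ u ∈ (Finset.range (a + b + 1)).filter
          (fun u : ℕ => |(a : ℤ) - (b : ℤ)| ≤ (u : ℤ) ∧ (a + b + u) % 2 = 0 ∧
            a + b + u ≤ 2 * l),
        qdim (u + 1) ((l : ℝ) + 2) := by
  change _ = ∑ u ∈ su2FusionChannels l a b, qdim (u + 1) _
  have hsin : sin (π / (l + 2)) ≠ 0 := (sin_pos_of_pos_of_lt_pi (by positivity)
    (div_lt_self pi_pos (by linarith [l.cast_nonneg (α := ℝ)]))).ne'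
  simp only [qdim_eq_sin_div, ← sum_div]
  rw [div_mul_div_comm, div_eq_div_iff (mul_ne_zero hsin hsin) hsin]
  linear_combination -sin (π / (l + 2)) * two_mul_sin_mul_sum_su2FusionChannels ha hb / 2

/-- The SU(2) level-`ℓ` fusion rules are compatible with the quantum
dimension `d_p^m = sin(pπ/m)/sin(π/m)`, `m = ℓ+2`:
`d_p^m · d_q^m = Σ_{k ∈ ⟨i,j⟩_ℓ} d_{2k+1}^m` where `p = 2i+1`, `q = 2j+1` and
`⟨i,j⟩_ℓ = {k : |i-j| ≤ k ≤ i+j, k ≡ i+j mod 1, i+j+k ≤ ℓ}`.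
Spins are encoded by their doubles: `a = 2i`, `b = 2j`, `u = 2k`. -/
theorem su2_fusion_quantum_dimension
    (l : ℕ) (hl : 1 ≤ l) (a b : ℕ) (ha : a ≤ l) (hb : b ≤ l) :
    qdim (a + 1) ((l : ℝ) + 2) * qdim (b + 1) ((l : ℝ) + 2) =
      ∑ u ∈ (Finset.range (a + b + 1)).filter
          (fun u : ℕ => |(a : ℤ) - (b : ℤ)| ≤ (u : ℤ) ∧ (a + b + u) % 2 = 0 ∧
            a + b + u ≤ 2 * l),
        qdim (u + 1) ((l : ℝ) + 2) :=
  su2_fusion_quantum_dimension_general l a b ha hb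
end

section
/- For the Neveu-Schwarz discrete series representation H_{ij}^ℓ (charge c_m, m = ℓ+2), the quantum dimension d(H_{ij}^ℓ) = (sin(pπ/m)/sin(π/m)) · (sin(qπ/(m+2))/sin(π/(m+2))) with p = 2i+1, q = 2j+1 satisfies: d is multiplicative for the fusion rules, i.e. d(H_{ij}^ℓ)·d(H_{i'j'}^ℓ) = Σ_{(i'',j'') ∈ ⟨i,i'⟩_ℓ × ⟨j,j'⟩_{ℓ+2}} d(H_{i''j''}^ℓ). -/
/-!
Writing `θ = π/(k+2)`, the level-`k` factor is `sin((a+1)θ)/sin θ`. The Clebsch–Gordan identity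
`sin((a+1)θ) sin((a'+1)θ) = sin θ · Σ sin((u+1)θ)`, `u = |a-a'|, |a-a'|+2, …, a+a'`, holds for every
`θ` by telescoping `2 sin x sin θ = cos(x-θ) - cos(x+θ)`. At `θ = π/(k+2)` the terms beyond the
truncation `a+a'+u ≤ 2k` cancel in pairs under `u ↦ 2k+2-u`, since `sin((2k+3-u)θ) = -sin((u+1)θ)`.
The two-level statement is the product of the two one-level ones.
-/

open Finset

/-- Doubled spins `u` of the Clebsch–Gordan decomposition of `V_{a/2} ⊗ V_{a'/2}`. -/
def clebschGordan (a a' : ℕ) : Finset ℕ :=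
  (range (a + a' + 1)).filter fun u => |(a : ℤ) - a'| ≤ u ∧ (a + a' + u) % 2 = 0

lemma clebschGordan_comm (a a' : ℕ) : clebschGordan a a' = clebschGordan a' a := by
  ext u
  simp only [clebschGordan, mem_filter, mem_range, abs_le]
  omega

lemma clebschGordan_eq_image {a a' : ℕ} (h : a' ≤ a) :
    clebschGordan a a' = (range (a' + 1)).image fun k => a - a' + 2 * k := by
  ext u
  simp only [clebschGordan, mem_filter, mem_range, mem_image, abs_le]
  constructor
  · rintro ⟨h₀, h₁, h₂⟩
    exact ⟨(u - (a - a')) / 2, by omega, by omega⟩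
  · rintro ⟨k, hk, rfl⟩
    omega

lemma two_mul_sin_mul_sin (x y : ℝ) :
    2 * Real.sin x * Real.sin y = Real.cos (x - y) - Real.cos (x + y) := by
  rw [Real.cos_sub, Real.cos_add]
  ring

lemma two_mul_sin_mul_sum_sin (θ c : ℝ) (n : ℕ) :
    2 * Real.sin θ * ∑ k ∈ range n, Real.sin ((c + 2 * k + 1) * θ) =
      Real.cos (c * θ) - Real.cos ((c + 2 * n) * θ) := by
  have hstep : ∀ k : ℕ, 2 * Real.sin θ * Real.sin ((c + 2 * k + 1) * θ) =
      Real.cos ((c + 2 * k) * θ) - Real.cos ((c + 2 * (k + 1 : ℕ)) * θ) := by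
    intro k
    rw [mul_right_comm, two_mul_sin_mul_sin]
    push_cast
    ring_nf
  simp only [mul_sum, hstep]
  simpa using sum_range_sub' (fun k => Real.cos ((c + 2 * k) * θ)) n

lemma sin_mul_sin_eq_sum_clebschGordan (θ : ℝ) (a a' : ℕ) :
    Real.sin ((a + 1) * θ) * Real.sin ((a' + 1) * θ) =
      Real.sin θ * ∑ u ∈ clebschGordan a a', Real.sin ((u + 1) * θ) := by
  wlog h : a' ≤ a generalizing a a'
  · rw [mul_comm, this a' a (by omega), clebschGordan_comm]
  have hcast : ∀ k : ℕ, ((a - a' + 2 * k : ℕ) : ℝ) + 1 = a - a' + 2 * k + 1 := by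
    intro k
    push_cast [Nat.cast_sub h]
    ring
  rw [clebschGordan_eq_image h, sum_image fun x _ y _ hxy => by omega]
  simp only [hcast]
  have hsum := two_mul_sin_mul_sum_sin θ ((a : ℝ) - a') (a' + 1)
  have hprod := two_mul_sin_mul_sin ((a + 1) * θ) ((a' + 1) * θ)
  rw [show (a + 1) * θ - (a' + 1) * θ = ((a : ℝ) - a') * θ by ring,
    show (a + 1) * θ + (a' + 1) * θ = ((a : ℝ) - a' + 2 * (a' + 1 : ℕ)) * θ by push_cast; ring]
    at hprod
  linarith

lemma sum_sin_clebschGordan_filter_not_le_eq_zero {k a a' : ℕ} (ha : a ≤ k) (ha' : a' ≤ k) :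
    ∑ u ∈ (clebschGordan a a').filter (fun u => ¬ a + a' + u ≤ 2 * k),
      Real.sin ((u + 1) * (Real.pi / (k + 2))) = 0 := by
  set s := (clebschGordan a a').filter (fun u => ¬ a + a' + u ≤ 2 * k)
  have hmem : ∀ u ∈ s, u ≤ 2 * k + 2 ∧ 2 * k + 2 - u ∈ s := by
    intro u hu
    simp only [s, clebschGordan, mem_filter, mem_range, abs_le] at hu ⊢
    omega
  have hneg : ∑ u ∈ s, Real.sin ((u + 1) * (Real.pi / (k + 2))) =
      ∑ u ∈ s, -Real.sin ((u + 1) * (Real.pi / (k + 2))) := by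
    refine sum_nbij' (fun u => 2 * k + 2 - u) (fun u => 2 * k + 2 - u) (fun u hu => (hmem u hu).2)
      (fun u hu => (hmem u hu).2) (fun u hu => by have := (hmem u hu).1; omega)
      (fun u hu => by have := (hmem u hu).1; omega) fun u hu => ?_
    have harg : ((2 * k + 2 - u : ℕ) + 1) * (Real.pi / (k + 2)) =
        2 * Real.pi - (u + 1) * (Real.pi / (k + 2)) := by
      rw [Nat.cast_sub (hmem u hu).1]
      push_cast
      field_simp
      ring
    rw [harg, Real.sin_two_pi_sub, neg_neg]
  rw [sum_neg_distrib] at hneg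
  linarith

/-- The level-`k` truncation `⟨a/2, a'/2⟩_k` of `clebschGordan a a'`. -/
def fusion (k a a' : ℕ) : Finset ℕ :=
  (clebschGordan a a').filter fun u => a + a' + u ≤ 2 * k

lemma qdim_mul_qdim {k a a' : ℕ} (ha : a ≤ k) (ha' : a' ≤ k) :
    qdim (a + 1) (k + 2) * qdim (a' + 1) (k + 2) = ∑ u ∈ fusion k a a', qdim (u + 1) (k + 2) := by
  set θ := Real.pi / (k + 2)
  have hθ : Real.sin θ ≠ 0 := by
    refine (Real.sin_pos_of_pos_of_lt_pi (by positivity) ?_).ne'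
    exact div_lt_self Real.pi_pos (by linarith [(k.cast_nonneg : (0 : ℝ) ≤ k)])
  have hqdim : ∀ u : ℕ, qdim (u + 1) (k + 2) = Real.sin ((u + 1) * θ) / Real.sin θ := by
    intro u
    rw [qdim, mul_div_assoc, Nat.cast_succ]
  simp only [hqdim, ← sum_div]
  rw [div_mul_div_comm, sin_mul_sin_eq_sum_clebschGordan, ← sum_filter_add_sum_filter_not _
    (fun u => a + a' + u ≤ 2 * k), sum_sin_clebschGordan_filter_not_le_eq_zero ha ha', add_zero,
    mul_div_mul_left _ _ hθ, fusion]

theorem neveu_schwarz_quantum_dimension_multiplicative_general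
    (l : ℕ) (a a' b b' : ℕ)
    (ha : a ≤ l) (ha' : a' ≤ l) (hb : b ≤ l + 2) (hb' : b' ≤ l + 2) :
    (qdim (a + 1) ((l : ℝ) + 2) * qdim (b + 1) ((l : ℝ) + 4)) *
      (qdim (a' + 1) ((l : ℝ) + 2) * qdim (b' + 1) ((l : ℝ) + 4)) =
    ∑ p ∈ ((Finset.range (a + a' + 1)) ×ˢ (Finset.range (b + b' + 1))).filter
        (fun p =>
          (|(a : ℤ) - (a' : ℤ)| ≤ (p.1 : ℤ) ∧ (a + a' + p.1) % 2 = 0 ∧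
            a + a' + p.1 ≤ 2 * l) ∧
          (|(b : ℤ) - (b' : ℤ)| ≤ (p.2 : ℤ) ∧ (b + b' + p.2) % 2 = 0 ∧
            b + b' + p.2 ≤ 2 * (l + 2))),
      qdim (p.1 + 1) ((l : ℝ) + 2) * qdim (p.2 + 1) ((l : ℝ) + 4) := by
  have hlevel : (l : ℝ) + 4 = ((l + 2 : ℕ) : ℝ) + 2 := by push_cast; ring
  have hfusion : ((range (a + a' + 1)) ×ˢ (range (b + b' + 1))).filter
        (fun p =>
          (|(a : ℤ) - (a' : ℤ)| ≤ (p.1 : ℤ) ∧ (a + a' + p.1) % 2 = 0 ∧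
            a + a' + p.1 ≤ 2 * l) ∧
          (|(b : ℤ) - (b' : ℤ)| ≤ (p.2 : ℤ) ∧ (b + b' + p.2) % 2 = 0 ∧
            b + b' + p.2 ≤ 2 * (l + 2))) =
      fusion l a a' ×ˢ fusion (l + 2) b b' := by
    ext
    simp only [fusion, clebschGordan, mem_filter, mem_product]
    tauto
  rw [mul_mul_mul_comm, qdim_mul_qdim ha ha', hlevel, qdim_mul_qdim hb hb', sum_mul_sum,
    hfusion, sum_product]

/-- For the Neveu-Schwarz discrete series `H_{ij}^ℓ` (charge `c_m`,
`m = ℓ+2`), the quantum dimension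
`d(H_{ij}^ℓ) = (sin(pπ/m)/sin(π/m))·(sin(qπ/(m+2))/sin(π/(m+2)))`, `p = 2i+1`,
`q = 2j+1`, is multiplicative for the fusion rules:
`d(H_{ij}^ℓ)·d(H_{i'j'}^ℓ) = Σ_{(i'',j'') ∈ ⟨i,i'⟩_ℓ × ⟨j,j'⟩_{ℓ+2}} d(H_{i''j''}^ℓ)`.
Half-integer spins are encoded by their doubles: `a = 2i`, `a' = 2i'`, `u = 2i''`
(with `a, a', u ≤ ℓ`) and `b = 2j`, `b' = 2j'`, `v = 2j''` (with `b, b', v ≤ ℓ+2`). -/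
theorem neveu_schwarz_quantum_dimension_multiplicative
    (l : ℕ) (hl : 1 ≤ l) (a a' b b' : ℕ)
    (ha : a ≤ l) (ha' : a' ≤ l) (hb : b ≤ l + 2) (hb' : b' ≤ l + 2) :
    (qdim (a + 1) ((l : ℝ) + 2) * qdim (b + 1) ((l : ℝ) + 4)) *
      (qdim (a' + 1) ((l : ℝ) + 2) * qdim (b' + 1) ((l : ℝ) + 4)) =
    ∑ p ∈ ((Finset.range (a + a' + 1)) ×ˢ (Finset.range (b + b' + 1))).filter
        (fun p =>
          (|(a : ℤ) - (a' : ℤ)| ≤ (p.1 : ℤ) ∧ (a + a' + p.1) % 2 = 0 ∧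
            a + a' + p.1 ≤ 2 * l) ∧
          (|(b : ℤ) - (b' : ℤ)| ≤ (p.2 : ℤ) ∧ (b + b' + p.2) % 2 = 0 ∧
            b + b' + p.2 ≤ 2 * (l + 2))),
      qdim (p.1 + 1) ((l : ℝ) + 2) * qdim (p.2 + 1) ((l : ℝ) + 4) :=
  neveu_schwarz_quantum_dimension_multiplicative_general l a a' b b' ha ha' hb hb'
end
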